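/- arXiv:1005.2506 — 2 statements merged into one kernel-verified Lean document; each statement's English description precedes it below -/
import Mathlib

section
/- Let 0 < R₂ < R₁. Then R₂·(K₀(R₁)·I₁(R₂) + I₀(R₁)·K₁(R₂)) > R₁·(K₀(R₁)·I₁(R₁) + I₀(R₁)·K₁(R₁)). In particular, the equation R₂/R₁ = (K₀(R₁)·I₁(R₁) + I₀(R₁)·K₁(R₁)) / (K₀(R₁)·I₁(R₂) + I₀(R₁)·K₁(R₂)) has no solution (R₁, R₂) with 0 < R₂ < R₁. -/
/-!
Put `a = K₀(R₁)`, `b = I₀(R₁)` and `F(x) = x (a I₁(x) + b K₁(x))`. The recurrences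
`(x I₁)' = x I₀` and `(x K₁)' = -x K₀` give `F'(x) = x (a I₀(x) - b K₀(x))`, and for
`0 < x < R₁` monotonicity gives `a I₀(x) < a b < b K₀(x)`. Hence `F` is strictly decreasing
on `(0, R₁]`, so `F(R₂) > F(R₁)`, which is the inequality; it rules out the equation after
clearing denominators.
-/

open Real Set

section Bessel

variable {I₀ I₁ K₀ K₁ : ℝ → ℝ}

theorem hasDerivAt_mul_linearCombination {x c d : ℝ}
    (hI₁ : DifferentiableAt ℝ I₁ x ∧ x * deriv I₁ x + I₁ x = x * I₀ x)
    (hK₁ : DifferentiableAt ℝ K₁ x ∧ x * deriv K₁ x + K₁ x = -(x * K₀ x)) :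
    HasDerivAt (fun y => y * (c * I₁ y + d * K₁ y)) (x * (c * I₀ x - d * K₀ x)) x := by
  have hcomb := (hI₁.1.hasDerivAt.const_mul c).add (hK₁.1.hasDerivAt.const_mul d)
  refine ((hasDerivAt_id x).mul hcomb).congr_deriv ?_
  simp only [id, Pi.add_apply]
  linear_combination c * hI₁.2 + d * hK₁.2

theorem strictAntiOn_mul_linearCombination {R₁ : ℝ}
    (hI₁ : ∀ x > (0 : ℝ), DifferentiableAt ℝ I₁ x ∧ x * deriv I₁ x + I₁ x = x * I₀ x)
    (hK₁ : ∀ x > (0 : ℝ), DifferentiableAt ℝ K₁ x ∧ x * deriv K₁ x + K₁ x = -(x * K₀ x))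
    (hI₀pos : 0 < I₀ R₁) (hK₀pos : 0 < K₀ R₁)
    (hI₀mono : StrictMonoOn I₀ (Ioi (0 : ℝ))) (hK₀anti : StrictAntiOn K₀ (Ioi (0 : ℝ))) :
    StrictAntiOn (fun x => x * (K₀ R₁ * I₁ x + I₀ R₁ * K₁ x)) (Ioc 0 R₁) := by
  have hderiv : ∀ x ∈ Ioc (0 : ℝ) R₁, HasDerivAt (fun x => x * (K₀ R₁ * I₁ x + I₀ R₁ * K₁ x))
      (x * (K₀ R₁ * I₀ x - I₀ R₁ * K₀ x)) x :=
    fun x hx => hasDerivAt_mul_linearCombination (hI₁ x hx.1) (hK₁ x hx.1)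
  refine strictAntiOn_of_deriv_neg (convex_Ioc 0 R₁)
    (fun x hx => (hderiv x hx).continuousAt.continuousWithinAt) fun x hx => ?_
  rw [interior_Ioc] at hx
  obtain ⟨hx₀, hxR⟩ := hx
  have hR₁ : R₁ ∈ Ioi (0 : ℝ) := hx₀.trans hxR
  have hI : I₀ x < I₀ R₁ := hI₀mono hx₀ hR₁ hxR
  have hK : K₀ R₁ < K₀ x := hK₀anti hx₀ hR₁ hxR
  have hneg : K₀ R₁ * I₀ x - I₀ R₁ * K₀ x < 0 := by nlinarith
  rw [(hderiv x ⟨hx₀, hxR.le⟩).deriv]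
  exact mul_neg_of_pos_of_neg hx₀ hneg

end Bessel

theorem div_ne_div_of_mul_lt_mul {p q A B : ℝ} (hp : 0 < p) (hq : 0 < q) (h : q * A < p * B) :
    p / q ≠ A / B := by
  intro heq
  rcases eq_or_ne B 0 with hB | hB
  · rw [hB, div_zero] at heq
    exact (div_pos hp hq).ne' heq
  · rw [div_eq_div_iff hq.ne' hB] at heq
    linarith

theorem stmt_1_general (R₁ R₂ : ℝ) (hR₂ : 0 < R₂) (hR : R₂ < R₁)
    (I₀ I₁ K₀ K₁ : ℝ → ℝ)
    (hI₁ : ∀ x > (0 : ℝ), DifferentiableAt ℝ I₁ x ∧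
      x * deriv I₁ x + I₁ x = x * I₀ x)
    (hK₁ : ∀ x > (0 : ℝ), DifferentiableAt ℝ K₁ x ∧
      x * deriv K₁ x + K₁ x = -(x * K₀ x))
    (hI₀pos : ∀ x > (0 : ℝ), 0 < I₀ x)
    (hK₀pos : ∀ x > (0 : ℝ), 0 < K₀ x)
    (hI₀mono : StrictMonoOn I₀ (Ioi (0 : ℝ)))
    (hK₀anti : StrictAntiOn K₀ (Ioi (0 : ℝ))) :
    R₂ * (K₀ R₁ * I₁ R₂ + I₀ R₁ * K₁ R₂) >
      R₁ * (K₀ R₁ * I₁ R₁ + I₀ R₁ * K₁ R₁) ∧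
    R₂ / R₁ ≠
      (K₀ R₁ * I₁ R₁ + I₀ R₁ * K₁ R₁) / (K₀ R₁ * I₁ R₂ + I₀ R₁ * K₁ R₂) := by
  have hR₁ : 0 < R₁ := hR₂.trans hR
  have hF : R₁ * (K₀ R₁ * I₁ R₁ + I₀ R₁ * K₁ R₁) < R₂ * (K₀ R₁ * I₁ R₂ + I₀ R₁ * K₁ R₂) :=
    strictAntiOn_mul_linearCombination hI₁ hK₁ (hI₀pos R₁ hR₁) (hK₀pos R₁ hR₁) hI₀mono hK₀anti
      ⟨hR₂, hR.le⟩ ⟨hR₁, le_rfl⟩ hR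
  exact ⟨hF, div_ne_div_of_mul_lt_mul hR₂ hR₁ hF⟩

/-- For `0 < R₂ < R₁` one has
`R₂·(K₀(R₁)·I₁(R₂) + I₀(R₁)·K₁(R₂)) > R₁·(K₀(R₁)·I₁(R₁) + I₀(R₁)·K₁(R₁))`;
in particular the equation
`R₂/R₁ = (K₀(R₁)·I₁(R₁) + I₀(R₁)·K₁(R₁))/(K₀(R₁)·I₁(R₂) + I₀(R₁)·K₁(R₂))`
has no solution with `0 < R₂ < R₁`. -/
theorem stmt_1 (R₁ R₂ : ℝ) (hR₂ : 0 < R₂) (hR : R₂ < R₁)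
    (I₀ I₁ K₀ K₁ : ℝ → ℝ)
    (hI₀ : ∀ x > (0 : ℝ), HasDerivAt I₀ (I₁ x) x)
    (hK₀ : ∀ x > (0 : ℝ), HasDerivAt K₀ (-K₁ x) x)
    (hI₁ : ∀ x > (0 : ℝ), DifferentiableAt ℝ I₁ x ∧
      x * deriv I₁ x + I₁ x = x * I₀ x)
    (hK₁ : ∀ x > (0 : ℝ), DifferentiableAt ℝ K₁ x ∧
      x * deriv K₁ x + K₁ x = -(x * K₀ x))
    (hI₀pos : ∀ x > (0 : ℝ), 0 < I₀ x)
    (hK₀pos : ∀ x > (0 : ℝ), 0 < K₀ x)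
    (hI₀mono : StrictMonoOn I₀ (Ioi (0 : ℝ)))
    (hK₀anti : StrictAntiOn K₀ (Ioi (0 : ℝ))) :
    R₂ * (K₀ R₁ * I₁ R₂ + I₀ R₁ * K₁ R₂) >
      R₁ * (K₀ R₁ * I₁ R₁ + I₀ R₁ * K₁ R₁) ∧
    R₂ / R₁ ≠
      (K₀ R₁ * I₁ R₁ + I₀ R₁ * K₁ R₁) / (K₀ R₁ * I₁ R₂ + I₀ R₁ * K₁ R₂) :=
  stmt_1_general R₁ R₂ hR₂ hR I₀ I₁ K₀ K₁ hI₁ hK₁ hI₀pos hK₀pos hI₀mono hK₀anti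
end

section
/- Let 0 < R₂ < R₁ and ψ₀ > 0, and set W = I₀(R₁)·K₀(R₂) − I₀(R₂)·K₀(R₁). Then the two equations ((1/R₁ + 1/R₂ + ψ₀)/ln(R₁/R₂))·(1/Rᵢ) = ψ₀·(K₀(R₁)·I₁(Rᵢ) + I₀(R₁)·K₁(Rᵢ))/W, for i = 1 and i = 2, cannot both hold. (This is the algebraic core of the statement that the problem has no radially symmetric stationary solution when G = 0.) -/
open Real Set

/-- For `0 < R₂ < R₁`, `ψ₀ > 0`, and
`W = I₀(R₁)·K₀(R₂) − I₀(R₂)·K₀(R₁)`, the two equations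
`((1/R₁ + 1/R₂ + ψ₀)/ln(R₁/R₂))·(1/Rᵢ) = ψ₀·(K₀(R₁)·I₁(Rᵢ) + I₀(R₁)·K₁(Rᵢ))/W`
for `i = 1, 2` cannot both hold. -/
theorem stmt_2 (R₁ R₂ ψ₀ : ℝ) (hR₂ : 0 < R₂) (hR : R₂ < R₁) (hψ₀ : 0 < ψ₀)
    (I₀ I₁ K₀ K₁ : ℝ → ℝ)
    (hI₀ : ∀ x > (0 : ℝ), HasDerivAt I₀ (I₁ x) x)
    (hK₀ : ∀ x > (0 : ℝ), HasDerivAt K₀ (-K₁ x) x)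
    (hI₁ : ∀ x > (0 : ℝ), DifferentiableAt ℝ I₁ x ∧
      x * deriv I₁ x + I₁ x = x * I₀ x)
    (hK₁ : ∀ x > (0 : ℝ), DifferentiableAt ℝ K₁ x ∧
      x * deriv K₁ x + K₁ x = -(x * K₀ x))
    (hI₀pos : ∀ x > (0 : ℝ), 0 < I₀ x)
    (hK₀pos : ∀ x > (0 : ℝ), 0 < K₀ x)
    (hI₀mono : StrictMonoOn I₀ (Ioi (0 : ℝ)))
    (hK₀anti : StrictAntiOn K₀ (Ioi (0 : ℝ)))
    (W : ℝ) (hW : W = I₀ R₁ * K₀ R₂ - I₀ R₂ * K₀ R₁) :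
    ¬ (((1 / R₁ + 1 / R₂ + ψ₀) / Real.log (R₁ / R₂)) * (1 / R₁) =
        ψ₀ * (K₀ R₁ * I₁ R₁ + I₀ R₁ * K₁ R₁) / W ∧
      ((1 / R₁ + 1 / R₂ + ψ₀) / Real.log (R₁ / R₂)) * (1 / R₂) =
        ψ₀ * (K₀ R₁ * I₁ R₂ + I₀ R₁ * K₁ R₂) / W) := by
  rintro ⟨h1, h2⟩
  have hR₁ : 0 < R₁ := hR₂.trans hR
  -- W > 0
  have hWpos : 0 < W := by
    have hI : I₀ R₂ < I₀ R₁ := hI₀mono (mem_Ioi.2 hR₂) (mem_Ioi.2 hR₁) hR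
    have hK : K₀ R₁ < K₀ R₂ := hK₀anti (mem_Ioi.2 hR₂) (mem_Ioi.2 hR₁) hR
    have h1 := hI₀pos R₂ hR₂
    have h2 := hK₀pos R₁ hR₁
    nlinarith
  have hW0 : W ≠ 0 := ne_of_gt hWpos
  have hL : 0 < Real.log (R₁ / R₂) :=
    Real.log_pos (by rw [lt_div_iff₀ hR₂]; linarith)
  have hL0 : Real.log (R₁ / R₂) ≠ 0 := ne_of_gt hL
  -- define g x = x * (K₀ R₁ * I₁ x + I₀ R₁ * K₁ x)
  set g : ℝ → ℝ := fun x => x * (K₀ R₁ * I₁ x + I₀ R₁ * K₁ x) with hg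
  -- derivative of g
  have hg' : ∀ x ∈ Icc R₂ R₁, HasDerivAt g
      (x * (K₀ R₁ * I₀ x - I₀ R₁ * K₀ x)) x := by
    intro x hx
    have hx0 : 0 < x := lt_of_lt_of_le hR₂ hx.1
    obtain ⟨hI₁d, hI₁e⟩ := hI₁ x hx0
    obtain ⟨hK₁d, hK₁e⟩ := hK₁ x hx0
    have hdI : HasDerivAt I₁ (deriv I₁ x) x := hI₁d.hasDerivAt
    have hdK : HasDerivAt K₁ (deriv K₁ x) x := hK₁d.hasDerivAt
    have : HasDerivAt g
        (1 * (K₀ R₁ * I₁ x + I₀ R₁ * K₁ x) +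
          x * (K₀ R₁ * deriv I₁ x + I₀ R₁ * deriv K₁ x)) x := by
      exact (hasDerivAt_id x).mul
        (((hdI.const_mul (K₀ R₁))).add ((hdK.const_mul (I₀ R₁))))
    convert this using 1
    linear_combination (-(K₀ R₁)) * hI₁e - I₀ R₁ * hK₁e
  -- g is strictly decreasing on [R₂, R₁]
  have hanti : StrictAntiOn g (Icc R₂ R₁) := by
    apply StrictAntiOn.mono (s := Icc R₂ R₁) ?_ (le_refl _)
    apply strictAntiOn_of_deriv_neg (convex_Icc R₂ R₁)
    · exact fun x hx => ((hg' x hx).continuousAt).continuousWithinAt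
    · intro x hx
      rw [interior_Icc] at hx
      have hx' : x ∈ Icc R₂ R₁ := ⟨hx.1.le, hx.2.le⟩
      rw [(hg' x hx').deriv]
      have hx0 : 0 < x := lt_of_lt_of_le hR₂ hx'.1
      have hI : I₀ x < I₀ R₁ := hI₀mono (mem_Ioi.2 hx0) (mem_Ioi.2 hR₁) hx.2
      have hK : K₀ R₁ < K₀ x := hK₀anti (mem_Ioi.2 hx0) (mem_Ioi.2 hR₁) hx.2
      have p1 := hK₀pos R₁ hR₁
      have p2 := hI₀pos x hx0
      have p3 := hI₀pos R₁ hR₁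
      have hlt : K₀ R₁ * I₀ x < I₀ R₁ * K₀ x := by
        nlinarith [mul_lt_mul_of_pos_left hI p1, mul_lt_mul_of_pos_right hK p3]
      exact mul_neg_of_pos_of_neg hx0 (by linarith)
  -- from the two equations, g R₁ = g R₂
  have hge : g R₁ = g R₂ := by
    have hR₁0 : R₁ ≠ 0 := ne_of_gt hR₁
    have hR₂0 : R₂ ≠ 0 := ne_of_gt hR₂
    have hψ0 : ψ₀ ≠ 0 := ne_of_gt hψ₀
    simp only [hg]
    field_simp at h1 h2
    have key := h1.symm.trans h2
    have hc : (0:ℝ) < ψ₀ * (R₁ * R₂ * Real.log (R₁ / R₂)) := by positivity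
    refine mul_left_cancel₀ hc.ne' ?_
    linear_combination key
  have := hanti (left_mem_Icc.2 hR.le) (right_mem_Icc.2 hR.le) hR
  linarith [hge ▸ this]
end
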